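/- Let qubits 1,2,3,4 be such that pair (1,2) and pair (3,4) are each in the Werner state ρ_W(F) with 0 ≤ F ≤ 1, and perform entanglement swapping by a Bell-state measurement on qubits (2,3): project the four-qubit state (I₂ ⊗ |φ+⟩⟨φ+|_{23} ⊗ I₂)(ρ_W(F) ⊗ ρ_W(F))(I₂ ⊗ |φ+⟩⟨φ+|_{23} ⊗ I₂). Then this outcome occurs with probability 1/4, and the normalized post-measurement state of qubits (1,4), obtained by tracing out qubits 2 and 3 and dividing by 1/4, is the Werner state ρ_W(F′) with F′ = 1/4 + (3/4)·((4F − 1)/3)². -/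
import Mathlib


open Matrix

/-- Index type for the state space of two qubits. -/
abbrev Q2 := Fin 2 × Fin 2

/-- Index type for the state space of four qubits (ordered as qubits 1, 2, 3, 4). -/
abbrev Q4 := Fin 2 × Fin 2 × Fin 2 × Fin 2

/-- The rank-one projector `|v⟩⟨v|` onto a vector `v`. -/
def dyad {n : Type*} (v : n → ℂ) : Matrix n n ℂ :=
  fun i j => v i * (starRingEnd ℂ) (v j)

/-- The Bell state `φ+ = (|00⟩ + |11⟩)/√2`. -/
noncomputable def phiP : Q2 → ℂ :=
  fun a => ((if a = (0, 0) then 1 else 0) + (if a = (1, 1) then 1 else 0)) / (Real.sqrt 2 : ℂ)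

/-- The Bell state `φ- = (|00⟩ - |11⟩)/√2`. -/
noncomputable def phiM : Q2 → ℂ :=
  fun a => ((if a = (0, 0) then 1 else 0) - (if a = (1, 1) then 1 else 0)) / (Real.sqrt 2 : ℂ)

/-- The Bell state `ψ+ = (|01⟩ + |10⟩)/√2`. -/
noncomputable def psiP : Q2 → ℂ :=
  fun a => ((if a = (0, 1) then 1 else 0) + (if a = (1, 0) then 1 else 0)) / (Real.sqrt 2 : ℂ)

/-- The Bell state `ψ- = (|01⟩ - |10⟩)/√2`. -/
noncomputable def psiM : Q2 → ℂ :=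
  fun a => ((if a = (0, 1) then 1 else 0) - (if a = (1, 0) then 1 else 0)) / (Real.sqrt 2 : ℂ)

/-- The Bell-diagonal two-qubit state with coefficients `(F1, F2, F3, F4)`:
`ρ = F1 |φ+⟩⟨φ+| + F2 |ψ-⟩⟨ψ-| + F3 |ψ+⟩⟨ψ+| + F4 |φ-⟩⟨φ-|`; its fidelity is `F1`. -/
noncomputable def bellDiag (F1 F2 F3 F4 : ℝ) : Matrix Q2 Q2 ℂ :=
  (F1 : ℂ) • dyad phiP + (F2 : ℂ) • dyad psiM + (F3 : ℂ) • dyad psiP + (F4 : ℂ) • dyad phiM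

/-- The four-qubit state in which qubit pair (1,2) and qubit pair (3,4) are each in the
two-qubit state `ρ`. -/
def pairState (ρ : Matrix Q2 Q2 ℂ) : Matrix Q4 Q4 ℂ :=
  fun a b => ρ (a.1, a.2.1) (b.1, b.2.1) * ρ (a.2.2.1, a.2.2.2) (b.2.2.1, b.2.2.2)

/-- The Werner state of fidelity `F`:
`ρ_W(F) = F |φ+⟩⟨φ+| + ((1-F)/3) (|ψ+⟩⟨ψ+| + |ψ-⟩⟨ψ-| + |φ-⟩⟨φ-|)`. -/
noncomputable def werner (F : ℝ) : Matrix Q2 Q2 ℂ :=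
  bellDiag F ((1 - F) / 3) ((1 - F) / 3) ((1 - F) / 3)

/-- The projector `I₂ ⊗ |φ+⟩⟨φ+|₍₂₃₎ ⊗ I₂` corresponding to the Bell-state-measurement
outcome `φ+` on qubits 2 and 3. -/
noncomputable def projPhiP23 : Matrix Q4 Q4 ℂ :=
  fun a b =>
    if a.1 = b.1 ∧ a.2.2.2 = b.2.2.2 then
      dyad phiP (a.2.1, a.2.2.1) (b.2.1, b.2.2.1)
    else 0

/-- Partial trace over qubits 2 and 3 of a four-qubit operator. -/
noncomputable def ptrace23 (M : Matrix Q4 Q4 ℂ) : Matrix Q2 Q2 ℂ :=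
  fun a b => ∑ c : Fin 2 × Fin 2, M (a.1, c.1, c.2, a.2) (b.1, c.1, c.2, b.2)

lemma sqrt2_sq : (Real.sqrt 2 : ℂ) * (Real.sqrt 2 : ℂ) = 2 := by
  norm_cast
  rw [Real.mul_self_sqrt]
  norm_num

lemma dyad_phiP (a b : Q2) : dyad phiP a b =
    ((if a = (0,0) then 1 else 0) + (if a = (1,1) then 1 else 0)) *
    ((if b = (0,0) then 1 else 0) + (if b = (1,1) then 1 else 0)) / 2 := by
  simp only [dyad, phiP, map_div₀, map_add, apply_ite (starRingEnd ℂ), _root_.map_one, map_zero,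
    Complex.conj_ofReal]
  rw [div_mul_div_comm, sqrt2_sq]

lemma dyad_phiM (a b : Q2) : dyad phiM a b =
    ((if a = (0,0) then 1 else 0) - (if a = (1,1) then 1 else 0)) *
    ((if b = (0,0) then 1 else 0) - (if b = (1,1) then 1 else 0)) / 2 := by
  simp only [dyad, phiM, map_div₀, map_sub, apply_ite (starRingEnd ℂ), _root_.map_one, map_zero,
    Complex.conj_ofReal]
  rw [div_mul_div_comm, sqrt2_sq]

lemma dyad_psiP (a b : Q2) : dyad psiP a b =
    ((if a = (0,1) then 1 else 0) + (if a = (1,0) then 1 else 0)) *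
    ((if b = (0,1) then 1 else 0) + (if b = (1,0) then 1 else 0)) / 2 := by
  simp only [dyad, psiP, map_div₀, map_add, apply_ite (starRingEnd ℂ), _root_.map_one, map_zero,
    Complex.conj_ofReal]
  rw [div_mul_div_comm, sqrt2_sq]

lemma dyad_psiM (a b : Q2) : dyad psiM a b =
    ((if a = (0,1) then 1 else 0) - (if a = (1,0) then 1 else 0)) *
    ((if b = (0,1) then 1 else 0) - (if b = (1,0) then 1 else 0)) / 2 := by
  simp only [dyad, psiM, map_div₀, map_sub, apply_ite (starRingEnd ℂ), _root_.map_one, map_zero,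
    Complex.conj_ofReal]
  rw [div_mul_div_comm, sqrt2_sq]

lemma projP_apply (a b : Q4) : projPhiP23 a b =
    if a.1 = b.1 ∧ a.2.2.2 = b.2.2.2 ∧ a.2.1 = a.2.2.1 ∧ b.2.1 = b.2.2.1 then (1/2 : ℂ)
    else 0 := by
  obtain ⟨x, m1, m2, y⟩ := a
  obtain ⟨x', n1, n2, y'⟩ := b
  simp only [projPhiP23, dyad_phiP]
  by_cases h1 : x = x' <;> by_cases h2 : y = y' <;>
    fin_cases m1 <;> fin_cases m2 <;> fin_cases n1 <;> fin_cases n2 <;>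
    simp_all <;> norm_num

lemma werner_apply (F : ℝ) (a b : Q2) : werner F a b =
    if a = b then (if a.1 = a.2 then ((2*F+1)/6 : ℂ) else ((1-F)/3 : ℂ))
    else if a.1 = a.2 ∧ b.1 = b.2 then ((4*F-1)/6 : ℂ) else 0 := by
  obtain ⟨a1, a2⟩ := a
  obtain ⟨b1, b2⟩ := b
  fin_cases a1 <;> fin_cases a2 <;> fin_cases b1 <;> fin_cases b2 <;>
  · simp only [werner, bellDiag, Matrix.add_apply, Matrix.smul_apply, dyad_phiP, dyad_phiM,
      dyad_psiP, dyad_psiM, smul_eq_mul, Prod.mk.injEq]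
    norm_num
    try ring

set_option maxHeartbeats 8000000 in
/-- Entanglement swapping on two Werner states: if pairs (1,2) and (3,4) are each in the
Werner state `ρ_W(F)` and a Bell-state measurement on qubits (2,3) projects onto `φ+`,
then this outcome occurs with probability `1/4`, and the normalized post-measurement state
of qubits (1,4) is the Werner state of fidelity `F' = 1/4 + (3/4)((4F - 1)/3)²`. -/
theorem werner_swap (F : ℝ) (h0 : 0 ≤ F) (h1 : F ≤ 1) :
    Matrix.trace (projPhiP23 * pairState (werner F) * projPhiP23) = (1 / 4 : ℂ)
    ∧ ((1 / 4 : ℂ))⁻¹ • ptrace23 (projPhiP23 * pairState (werner F) * projPhiP23)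
        = werner (1 / 4 + (3 / 4) * ((4 * F - 1) / 3) ^ 2) := by
  constructor
  · simp only [Matrix.trace, Matrix.diag, Matrix.mul_apply, projP_apply, pairState, werner_apply,
      Fintype.sum_prod_type, Fin.sum_univ_two, Prod.mk.injEq]
    norm_num
    ring
  · ext ⟨a1, a2⟩ ⟨b1, b2⟩
    fin_cases a1 <;> fin_cases a2 <;> fin_cases b1 <;> fin_cases b2 <;>
    · simp only [ptrace23, Matrix.smul_apply, Matrix.mul_apply, projP_apply, pairState,
        werner_apply, Fintype.sum_prod_type, Fin.sum_univ_two, smul_eq_mul, Prod.mk.injEq]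
      norm_num
      try ring_nf
      try ring
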